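/- arXiv:2202.13684 — 4 statements merged into one kernel-verified Lean document; each statement's English description precedes it below -/
import Mathlib

section
/- Let P ⊆ ℝ^n be a polytope whose set of vertices (extreme points) is {x_1,…,x_m}, with centroid (1/m)∑_{i=1}^m x_i = 0 and with the affine span of the vertices equal to ℝ^n. Let G_{V(P)} be the subgroup of the permutation group S_m consisting of all permutations g of {1,…,m} such that ‖x_i − x_j‖₂ = ‖x_{g(i)} − x_{g(j)}‖₂ for all i, j, and for g ∈ G_{V(P)} let α_g be the unique affine map with α_g(x_i) = x_{g(i)} for all i. Then the group of symmetries Sym(P) (all surjective isometries φ of Euclidean ℝ^n with φ(P) = P, under composition) equals {α_g : g ∈ G_{V(P)}}, and the map g ↦ α_g is a group isomorphism from G_{V(P)} onto Sym(P); in particular Sym(P) ≅ G_{V(P)}. -/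
open Set Function

lemma affineMap_eq_of_eqOn {E : Type*} [NormedAddCommGroup E] [NormedSpace ℝ E]
    (α β : E →ᵃ[ℝ] E) (s : Set E) (hspan : affineSpan ℝ s = ⊤)
    (h : Set.EqOn (⇑α) (⇑β) s) : ⇑α = ⇑β := by
  obtain ⟨p, hp⟩ : s.Nonempty := by
    by_contra hne
    rw [Set.not_nonempty_iff_eq_empty] at hne
    rw [hne] at hspan
    simp at hspan
  have hvs : vectorSpan ℝ s = ⊤ := by
    rw [← direction_affineSpan, hspan, AffineSubspace.direction_top]
  have hlin : α.linear = β.linear := by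
    rw [vectorSpan_eq_span_vsub_set_right ℝ hp] at hvs
    refine LinearMap.ext_on hvs ?_
    rintro v ⟨y, hy, rfl⟩
    have h1 := α.map_vadd p (y -ᵥ p)
    have h2 := β.map_vadd p (y -ᵥ p)
    simp only [vsub_vadd] at h1 h2
    have key : α.linear (y -ᵥ p) +ᵥ β p = β.linear (y -ᵥ p) +ᵥ β p := by
      rw [← h2, ← h hy, h1, h hp]
    exact vadd_right_cancel _ key
  funext v
  have h1 := α.map_vadd p (v -ᵥ p)
  have h2 := β.map_vadd p (v -ᵥ p)
  simp only [vsub_vadd] at h1 h2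
  rw [h1, h2, hlin, h hp]


open Set Function Finset
open scoped RealInnerProductSpace

lemma exists_linear_of_dist_perm (n m : ℕ) (hm : 1 ≤ m)
    (x : Fin m → EuclideanSpace ℝ (Fin n))
    (hsum : ∑ i, x i = 0)
    (hspan' : Submodule.span ℝ (Set.range x) = ⊤)
    (g : Equiv.Perm (Fin m))
    (hg : ∀ i j, dist (x i) (x j) = dist (x (g i)) (x (g j))) :
    ∃ L : EuclideanSpace ℝ (Fin n) →ₗ[ℝ] EuclideanSpace ℝ (Fin n),
      (∀ i, L (x i) = x (g i)) ∧ Isometry L ∧ Function.Surjective L := by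
  have hmR : (m : ℝ) ≠ 0 := Nat.cast_ne_zero.mpr (by omega)
  -- distances as norms
  have hgn : ∀ i j, ‖x i - x j‖ = ‖x (g i) - x (g j)‖ := by
    intro i j; rw [← dist_eq_norm, ← dist_eq_norm]; exact hg i j
  -- key sum identity
  have key : ∀ y : Fin m → EuclideanSpace ℝ (Fin n), (∑ i, y i = 0) → ∀ i,
      ∑ j, ‖y i - y j‖ ^ 2 = (m : ℝ) * ‖y i‖ ^ 2 + ∑ j, ‖y j‖ ^ 2 := by
    intro y hy i
    have : ∀ j, ‖y i - y j‖ ^ 2 = ‖y i‖ ^ 2 - 2 * ⟪y i, y j⟫ + ‖y j‖ ^ 2 := by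
      intro j; rw [norm_sub_sq_real]
    rw [Finset.sum_congr rfl fun j _ => this j]
    rw [Finset.sum_add_distrib, Finset.sum_sub_distrib, ← Finset.mul_sum,
      ← inner_sum, hy, inner_zero_right]
    simp [Finset.card_univ]
  have hsum' : ∑ i, x (g i) = 0 := by
    rw [Equiv.sum_comp g x, hsum]
  -- norms preserved
  have hnorm : ∀ i, ‖x (g i)‖ = ‖x i‖ := by
    intro i
    have h1 := key x hsum i
    have h2 := key (fun j => x (g j)) hsum' i
    have h3 : ∑ j, ‖x (g i) - x (g j)‖ ^ 2 = ∑ j, ‖x i - x j‖ ^ 2 := by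
      refine Finset.sum_congr rfl fun j _ => ?_
      rw [← hgn i j]
    have h4 : ∑ j, ‖x (g j)‖ ^ 2 = ∑ j, ‖x j‖ ^ 2 := Equiv.sum_comp g (fun j => ‖x j‖ ^ 2)
    rw [h3, h1, h4] at h2
    have : (m : ℝ) * ‖x i‖ ^ 2 = (m : ℝ) * ‖x (g i)‖ ^ 2 := by linarith
    have := mul_left_cancel₀ hmR this
    nlinarith [norm_nonneg (x i), norm_nonneg (x (g i))]
  -- inner products preserved
  have hinner : ∀ i j, ⟪x (g i), x (g j)⟫ = ⟪x i, x j⟫ := by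
    intro i j
    have h1 : ‖x i - x j‖ ^ 2 = ‖x i‖ ^ 2 - 2 * ⟪x i, x j⟫ + ‖x j‖ ^ 2 :=
      norm_sub_sq_real _ _
    have h2 : ‖x (g i) - x (g j)‖ ^ 2 = ‖x (g i)‖ ^ 2 - 2 * ⟪x (g i), x (g j)⟫ + ‖x (g j)‖ ^ 2 :=
      norm_sub_sq_real _ _
    rw [← hgn i j, hnorm i, hnorm j] at h2
    rw [h1] at h2
    linarith
  -- linear combination maps
  set T : (Fin m → ℝ) →ₗ[ℝ] EuclideanSpace ℝ (Fin n) := Fintype.linearCombination ℝ x with hT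
  set T' : (Fin m → ℝ) →ₗ[ℝ] EuclideanSpace ℝ (Fin n) :=
    Fintype.linearCombination ℝ (fun i => x (g i)) with hT'
  have hTapp : ∀ c, T c = ∑ i, c i • x i := fun _ => rfl
  have hT'app : ∀ c, T' c = ∑ i, c i • x (g i) := fun _ => rfl
  have hTsurj : Function.Surjective T := by
    rw [← LinearMap.range_eq_top, hT, Fintype.range_linearCombination, hspan']
  -- inner products of combinations preserved
  have hTinner : ∀ c d, ⟪T' c, T' d⟫ = ⟪T c, T d⟫ := by
    intro c d
    rw [hTapp, hTapp, hT'app, hT'app, sum_inner, sum_inner]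
    refine Finset.sum_congr rfl fun i _ => ?_
    rw [inner_sum, inner_sum]
    refine Finset.sum_congr rfl fun j _ => ?_
    rw [real_inner_smul_left, real_inner_smul_left, real_inner_smul_right,
      real_inner_smul_right, hinner]
  have hker : LinearMap.ker T ≤ LinearMap.ker T' := by
    intro c hc
    rw [LinearMap.mem_ker] at hc ⊢
    have : ⟪T' c, T' c⟫ = 0 := by rw [hTinner, hc, inner_zero_right]
    exact inner_self_eq_zero.mp this
  set q := (T.quotKerEquivOfSurjective hTsurj) with hq
  set L : EuclideanSpace ℝ (Fin n) →ₗ[ℝ] EuclideanSpace ℝ (Fin n) :=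
    ((LinearMap.ker T).liftQ T' hker) ∘ₗ (q.symm : _ →ₗ[ℝ] _) with hL
  have hLT : ∀ c, L (T c) = T' c := by
    intro c
    have hmk : q.symm (T c) = Submodule.Quotient.mk c := by
      rw [LinearEquiv.symm_apply_eq]; rfl
    simp only [hL, LinearMap.coe_comp, Function.comp_apply, LinearEquiv.coe_coe, hmk]
    exact Submodule.liftQ_apply _ _ _
  have hLx : ∀ i, L (x i) = x (g i) := by
    intro i
    have h1 : T (Pi.single i 1) = x i := by
      rw [hTapp]; simp [Pi.single_apply]
    have h2 : T' (Pi.single i 1) = x (g i) := by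
      rw [hT'app]; simp [Pi.single_apply]
    rw [← h1, hLT, h2]
  -- L preserves inner products
  have hLinner : ∀ u v, ⟪L u, L v⟫ = ⟪u, v⟫ := by
    intro u v
    obtain ⟨c, rfl⟩ := hTsurj u
    obtain ⟨d, rfl⟩ := hTsurj v
    rw [hLT, hLT, hTinner]
  have hLiso : Isometry L := by
    refine AddMonoidHomClass.isometry_of_norm L fun w => ?_
    have := hLinner w w
    rw [real_inner_self_eq_norm_sq, real_inner_self_eq_norm_sq] at this
    nlinarith [norm_nonneg (L w), norm_nonneg w]
  have hLsurj : Function.Surjective L :=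
    (LinearMap.injective_iff_surjective).mp hLiso.injective
  exact ⟨L, hLx, hLiso, hLsurj⟩


open Set Function

lemma affineEquiv_image_extremePoints {E : Type*} [NormedAddCommGroup E] [NormedSpace ℝ E]
    (e : E ≃ᵃ[ℝ] E) (s : Set E) :
    ⇑e '' Set.extremePoints ℝ s = Set.extremePoints ℝ (⇑e '' s) := by
  ext b
  have him : ∀ u v : E, ⇑e '' openSegment ℝ u v = openSegment ℝ (e u) (e v) := fun u v =>
    image_openSegment _ e.toAffineMap u v
  constructor
  · rintro ⟨a, ⟨has, ha⟩, rfl⟩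
    refine ⟨⟨a, has, rfl⟩, ?_⟩
    rintro _ ⟨u, hu, rfl⟩ _ ⟨v, hv, rfl⟩ hseg
    rw [← him] at hseg
    obtain ⟨w, hw, hwa⟩ := hseg
    obtain rfl : w = a := e.injective hwa
    rcases ha hu hv hw with h1
    exact congrArg e h1
  · rintro ⟨⟨a, has, rfl⟩, ha⟩
    refine ⟨a, ⟨has, ?_⟩, rfl⟩
    intro u hu v hv hseg
    rcases ha ⟨u, hu, rfl⟩ ⟨v, hv, rfl⟩ (by rw [← him]; exact ⟨a, hseg, rfl⟩)
      with h1
    exact e.injective h1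


open Set Function



/-- Let `P ⊆ ℝⁿ` be the polytope with (distinct) vertices `x₁,…,x_m`, centroid `0`,
and full-dimensional. Let `G_{V(P)}` be the set of permutations of `{1,…,m}`
preserving pairwise Euclidean distances of vertices, and for such `g` let `α_g`
be the (unique) affine map with `α_g(xᵢ) = x_{g(i)}`. Then the group of symmetries
of `P` (surjective isometries `f` of `ℝⁿ` with `f(P) = P`) equals `{α_g : g ∈ G_{V(P)}}`,
and `g ↦ α_g` is a group isomorphism onto it. -/
theorem symmetries_eq_affine_maps_of_distance_preserving_perms
    (n m : ℕ) (hm : 1 ≤ m)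
    (x : Fin m → EuclideanSpace ℝ (Fin n)) (hinj : Function.Injective x)
    (hvert : (convexHull ℝ (Set.range x)).extremePoints ℝ = Set.range x)
    (hcent : (m : ℝ)⁻¹ • (∑ i, x i) = 0)
    (hspan : affineSpan ℝ (Set.range x) = ⊤) :
    ({f : EuclideanSpace ℝ (Fin n) → EuclideanSpace ℝ (Fin n) |
        Function.Surjective f ∧ Isometry f ∧ f '' convexHull ℝ (Set.range x)
          = convexHull ℝ (Set.range x)}
      = {f | ∃ g : Equiv.Perm (Fin m),
          (∀ i j, dist (x i) (x j) = dist (x (g i)) (x (g j))) ∧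
          ∃ α : EuclideanSpace ℝ (Fin n) →ᵃ[ℝ] EuclideanSpace ℝ (Fin n),
            (∀ i, α (x i) = x (g i)) ∧ f = ⇑α}) ∧
    ∃ Φ : {g : Equiv.Perm (Fin m) // ∀ i j, dist (x i) (x j) = dist (x (g i)) (x (g j))}
        ≃ {f : EuclideanSpace ℝ (Fin n) → EuclideanSpace ℝ (Fin n) //
            Function.Surjective f ∧ Isometry f ∧ f '' convexHull ℝ (Set.range x)
              = convexHull ℝ (Set.range x)},
      (∀ g, ∃ α : EuclideanSpace ℝ (Fin n) →ᵃ[ℝ] EuclideanSpace ℝ (Fin n),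
          (Φ g).1 = ⇑α ∧ ∀ i, α (x i) = x (g.1 i)) ∧
      (∀ (g g' : Equiv.Perm (Fin m))
          (hg : ∀ i j, dist (x i) (x j) = dist (x (g i)) (x (g j)))
          (hg' : ∀ i j, dist (x i) (x j) = dist (x (g' i)) (x (g' j)))
          (hgg' : ∀ i j, dist (x i) (x j) = dist (x ((g * g') i)) (x ((g * g') j))),
        (Φ ⟨g * g', hgg'⟩).1 = (Φ ⟨g, hg⟩).1 ∘ (Φ ⟨g', hg'⟩).1) := by
  have hmR : (m : ℝ) ≠ 0 := Nat.cast_ne_zero.mpr (by omega)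
  have hsum : ∑ i, x i = 0 := by
    rcases smul_eq_zero.mp hcent with h | h
    · exact absurd h (inv_ne_zero hmR)
    · exact h
  have hspan' : Submodule.span ℝ (Set.range x) = ⊤ := by
    rw [eq_top_iff]
    intro v _
    exact affineSpan_subset_span (hspan ▸ AffineSubspace.mem_top ℝ _ v)
  -- image of the vertex set and of the hull under an induced map
  have himage : ∀ (L : EuclideanSpace ℝ (Fin n) →ₗ[ℝ] EuclideanSpace ℝ (Fin n))
      (g : Equiv.Perm (Fin m)), (∀ i, L (x i) = x (g i)) →
      ⇑L '' convexHull ℝ (Set.range x) = convexHull ℝ (Set.range x) := by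
    intro L g h
    rw [L.image_convexHull]
    congr 1
    rw [← Set.range_comp]
    have : (⇑L ∘ x) = x ∘ ⇑g := funext fun i => h i
    rw [this, Set.range_comp, Equiv.range_eq_univ, Set.image_univ]
  -- direction B : permutation-induced affine maps are symmetries
  have dirB : ∀ f : EuclideanSpace ℝ (Fin n) → EuclideanSpace ℝ (Fin n),
      (∃ g : Equiv.Perm (Fin m),
          (∀ i j, dist (x i) (x j) = dist (x (g i)) (x (g j))) ∧
          ∃ α : EuclideanSpace ℝ (Fin n) →ᵃ[ℝ] EuclideanSpace ℝ (Fin n),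
            (∀ i, α (x i) = x (g i)) ∧ f = ⇑α) →
      Function.Surjective f ∧ Isometry f ∧ f '' convexHull ℝ (Set.range x)
          = convexHull ℝ (Set.range x) := by
    rintro f ⟨g, hg, α, hα, rfl⟩
    obtain ⟨L, hLx, hLiso, hLsurj⟩ := exists_linear_of_dist_perm n m hm x hsum hspan' g hg
    have hαL : ⇑α = ⇑L := by
      have := affineMap_eq_of_eqOn α L.toAffineMap (Set.range x) hspan ?_
      · rwa [LinearMap.coe_toAffineMap] at this
      · rintro _ ⟨i, rfl⟩
        show α (x i) = L.toAffineMap (x i)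
        rw [LinearMap.coe_toAffineMap, hα i, hLx i]
    rw [hαL]
    exact ⟨hLsurj, hLiso, himage L g hLx⟩
  -- direction A : symmetries come from permutations
  have dirA : ∀ f : EuclideanSpace ℝ (Fin n) → EuclideanSpace ℝ (Fin n),
      Function.Surjective f → Isometry f →
      f '' convexHull ℝ (Set.range x) = convexHull ℝ (Set.range x) →
      ∃ g : Equiv.Perm (Fin m),
          (∀ i j, dist (x i) (x j) = dist (x (g i)) (x (g j))) ∧
          ∃ α : EuclideanSpace ℝ (Fin n) →ᵃ[ℝ] EuclideanSpace ℝ (Fin n),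
            (∀ i, α (x i) = x (g i)) ∧ f = ⇑α := by
    intro f hfs hfi hfim
    set e : EuclideanSpace ℝ (Fin n) ≃ᵢ EuclideanSpace ℝ (Fin n) :=
      ⟨Equiv.ofBijective f ⟨hfi.injective, hfs⟩, hfi⟩ with he
    have hef : ⇑e = f := rfl
    set ae := e.toRealAffineIsometryEquiv with hae
    have hea : ⇑ae = f := e.coeFn_toRealAffineIsometryEquiv
    have hea' : ⇑ae.toAffineEquiv = f := by
      rw [AffineIsometryEquiv.coe_toAffineEquiv, hea]
    have himg : f '' Set.range x = Set.range x := by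
      conv_lhs => rw [← hvert]
      rw [← hea', affineEquiv_image_extremePoints, hea', hfim, hvert]
    have hmem : ∀ i, ∃ j, x j = f (x i) := by
      intro i
      have : f (x i) ∈ f '' Set.range x := ⟨x i, ⟨i, rfl⟩, rfl⟩
      rw [himg] at this
      obtain ⟨j, hj⟩ := this
      exact ⟨j, hj⟩
    choose g0 hg0 using hmem
    have hg0inj : Function.Injective g0 := by
      intro i j hij
      apply hinj
      apply hfi.injective
      rw [← hg0 i, ← hg0 j, hij]
    set g : Equiv.Perm (Fin m) :=
      Equiv.ofBijective g0 (Finite.injective_iff_bijective.mp hg0inj) with hgdef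
    have hgapp : ∀ i, x (g i) = f (x i) := fun i => hg0 i
    refine ⟨g, ?_, ae.toAffineEquiv.toAffineMap, ?_, ?_⟩
    · intro i j
      rw [hgapp i, hgapp j, hfi.dist_eq]
    · intro i
      rw [AffineEquiv.coe_toAffineMap, hea', hgapp i]
    · rw [AffineEquiv.coe_toAffineMap, hea']
  have hseteq : ({f : EuclideanSpace ℝ (Fin n) → EuclideanSpace ℝ (Fin n) |
        Function.Surjective f ∧ Isometry f ∧ f '' convexHull ℝ (Set.range x)
          = convexHull ℝ (Set.range x)}
      = {f | ∃ g : Equiv.Perm (Fin m),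
          (∀ i j, dist (x i) (x j) = dist (x (g i)) (x (g j))) ∧
          ∃ α : EuclideanSpace ℝ (Fin n) →ᵃ[ℝ] EuclideanSpace ℝ (Fin n),
            (∀ i, α (x i) = x (g i)) ∧ f = ⇑α}) := by
    ext f
    constructor
    · rintro ⟨h1, h2, h3⟩
      exact dirA f h1 h2 h3
    · intro h
      exact dirB f h
  refine ⟨hseteq, ?_⟩
  -- construction of Φ
  set Lf : ∀ _ : {g : Equiv.Perm (Fin m) //
      ∀ i j, dist (x i) (x j) = dist (x (g i)) (x (g j))},
      EuclideanSpace ℝ (Fin n) →ₗ[ℝ] EuclideanSpace ℝ (Fin n) :=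
    fun gp => (exists_linear_of_dist_perm n m hm x hsum hspan' gp.1 gp.2).choose with hLf
  have LfX : ∀ gp i, Lf gp (x i) = x (gp.1 i) :=
    fun gp => (exists_linear_of_dist_perm n m hm x hsum hspan' gp.1 gp.2).choose_spec.1
  have LfI : ∀ gp, Isometry ⇑(Lf gp) :=
    fun gp => (exists_linear_of_dist_perm n m hm x hsum hspan' gp.1 gp.2).choose_spec.2.1
  have LfS : ∀ gp, Function.Surjective ⇑(Lf gp) :=
    fun gp => (exists_linear_of_dist_perm n m hm x hsum hspan' gp.1 gp.2).choose_spec.2.2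
  set F : {g : Equiv.Perm (Fin m) //
      ∀ i j, dist (x i) (x j) = dist (x (g i)) (x (g j))} →
      {f : EuclideanSpace ℝ (Fin n) → EuclideanSpace ℝ (Fin n) //
        Function.Surjective f ∧ Isometry f ∧ f '' convexHull ℝ (Set.range x)
          = convexHull ℝ (Set.range x)} :=
    fun gp => ⟨⇑(Lf gp), LfS gp, LfI gp, himage (Lf gp) gp.1 (LfX gp)⟩ with hF
  have hFinj : Function.Injective F := by
    intro gp gp' h
    have h' : ⇑(Lf gp) = ⇑(Lf gp') := congrArg Subtype.val h
    apply Subtype.ext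
    apply Equiv.ext
    intro i
    apply hinj
    rw [← LfX gp i, ← LfX gp' i, h']
  have hFsurj : Function.Surjective F := by
    rintro ⟨f, h1, h2, h3⟩
    obtain ⟨g, hg, α, hα, rfl⟩ := dirA f h1 h2 h3
    refine ⟨⟨g, hg⟩, ?_⟩
    apply Subtype.ext
    show ⇑(Lf ⟨g, hg⟩) = ⇑α
    have := affineMap_eq_of_eqOn (Lf ⟨g, hg⟩).toAffineMap α (Set.range x) hspan ?_
    · rwa [LinearMap.coe_toAffineMap] at this
    · rintro _ ⟨i, rfl⟩
      show (Lf ⟨g, hg⟩).toAffineMap (x i) = α (x i)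
      rw [LinearMap.coe_toAffineMap, LfX ⟨g, hg⟩ i, hα i]
  refine ⟨Equiv.ofBijective F ⟨hFinj, hFsurj⟩, ?_, ?_⟩
  · intro gp
    refine ⟨(Lf gp).toAffineMap, ?_, ?_⟩
    · show ⇑(Lf gp) = ⇑(Lf gp).toAffineMap
      rw [LinearMap.coe_toAffineMap]
    · intro i
      rw [LinearMap.coe_toAffineMap]
      exact LfX gp i
  · intro g g' hg hg' hgg'
    show ⇑(Lf ⟨g * g', hgg'⟩) = ⇑(Lf ⟨g, hg⟩) ∘ ⇑(Lf ⟨g', hg'⟩)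
    have : Lf ⟨g * g', hgg'⟩ = (Lf ⟨g, hg⟩) ∘ₗ (Lf ⟨g', hg'⟩) := by
      apply LinearMap.ext_on hspan'
      rintro _ ⟨i, rfl⟩
      rw [LinearMap.comp_apply, LfX ⟨g * g', hgg'⟩ i, LfX ⟨g', hg'⟩ i, LfX ⟨g, hg⟩ (g' i)]
      rfl
    rw [this, LinearMap.coe_comp]
end

section
/- For every n ≥ 1, the group of symmetries of the regular hyperoctahedron ◇^n (all surjective isometries φ of Euclidean ℝ^n with φ(◇^n) = ◇^n, under composition) is isomorphic as a group to the automorphism group of the graph of ◇^n, namely the simple graph on the 2n vertices {±e_1,…,±e_n} in which two distinct vertices v, v' are adjacent if and only if v' ≠ −v. -/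
/-- The vertex set `{±e₁,…,±eₙ}` of the regular hyperoctahedron in `ℝⁿ`. -/
def octVerts (n : ℕ) : Set (EuclideanSpace ℝ (Fin n)) :=
  (Set.range fun i => EuclideanSpace.single i (1 : ℝ)) ∪
    (Set.range fun i => -EuclideanSpace.single i (1 : ℝ))

/-- The graph of the regular hyperoctahedron: vertices `{±e₁,…,±eₙ}`, two distinct
vertices `v, v'` being adjacent iff `v' ≠ -v`. -/
def octGraph (n : ℕ) : SimpleGraph (octVerts n) where
  Adj v w := v.1 ≠ w.1 ∧ w.1 ≠ -v.1
  symm := by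
    constructor
    rintro v w ⟨h1, h2⟩
    exact ⟨fun h => h1 h.symm, fun h => h2 (by rw [h, neg_neg])⟩
  loopless := by constructor; rintro v ⟨h1, _⟩; exact h1 rfl

/-- The group of symmetries of `A ⊆ ℝⁿ`: all (bijective) isometries of Euclidean
`ℝⁿ` mapping `A` onto `A`, as a subgroup of the isometry group of `ℝⁿ`. -/
noncomputable def symGroup (n : ℕ) (A : Set (EuclideanSpace ℝ (Fin n))) :
    Subgroup (EuclideanSpace ℝ (Fin n) ≃ᵢ EuclideanSpace ℝ (Fin n)) where
  carrier := {φ | φ '' A = A}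
  one_mem' := by simp
  mul_mem' := by
    intro a b ha hb
    show ⇑(a * b) '' A = A
    rw [show ⇑(a * b) = ⇑a ∘ ⇑b from rfl, Set.image_comp]
    rw [Set.mem_setOf_eq] at ha hb
    rw [hb, ha]
  inv_mem' := by
    intro a ha
    rw [Set.mem_setOf_eq] at ha ⊢
    conv_lhs => rw [← ha, ← Set.image_comp]
    simp
/-- The automorphism group of a simple graph: all permutations of the vertex set
preserving adjacency and nonadjacency, as a subgroup of the permutation group. -/
def autGroup {V : Type*} (G : SimpleGraph V) : Subgroup (Equiv.Perm V) where
  carrier := {π | ∀ v w, G.Adj (π v) (π w) ↔ G.Adj v w}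
  one_mem' := by intro v w; rfl
  mul_mem' := by
    intro a b ha hb v w
    simpa [Equiv.Perm.mul_apply] using (ha (b v) (b w)).trans (hb v w)
  inv_mem' := by
    intro a ha v w
    simpa using (ha (a⁻¹ v) (a⁻¹ w)).symm

/-!
The vertices `±eᵢ` lie on the unit sphere, so they are exactly the extreme points of `◇ⁿ`.
By Mazur–Ulam a surjective isometry is affine, hence every symmetry of `◇ⁿ` permutes the
vertices; it preserves distances, so it maps the antipodal pair `{v, -v}` (at distance `2`) to an
antipodal pair and therefore preserves the graph, in which `u ~ w` iff `⟪u, w⟫ = 0`. The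
restriction to the vertices is injective because the vertices affinely span `ℝⁿ`. Conversely, a
graph automorphism commutes with `v ↦ -v` (`-v` is the only non-neighbour of `v` besides `v`)
and sends `e₁, …, eₙ` to pairwise adjacent, i.e. orthonormal, vertices; the linear isometry
`eᵢ ↦ π eᵢ` then restricts to `π`.
-/

open Set

theorem AffineEquiv.image_extremePoints {𝕜 E F : Type*} [Ring 𝕜] [PartialOrder 𝕜]
    [IsOrderedRing 𝕜] [AddCommGroup E] [Module 𝕜 E] [AddCommGroup F] [Module 𝕜 F]
    (f : E ≃ᵃ[𝕜] F) (s : Set E) :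
    f '' s.extremePoints 𝕜 = (f '' s).extremePoints 𝕜 := by
  ext b
  obtain ⟨a, rfl⟩ := f.surjective b
  have : ∀ x y, f '' openSegment 𝕜 x y = openSegment 𝕜 (f x) (f y) :=
    image_openSegment _ f.toAffineMap
  simp only [mem_extremePoints, f.surjective.forall, f.injective.mem_set_image,
    f.injective.eq_iff, ← this]

section Normed

variable {E F : Type*} [NormedAddCommGroup E] [NormedSpace ℝ E]
  [NormedAddCommGroup F] [NormedSpace ℝ F]

theorem IsometryEquiv.image_extremePoints (f : E ≃ᵢ F) (s : Set E) :
    f '' s.extremePoints ℝ = (f '' s).extremePoints ℝ :=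
  f.toRealAffineIsometryEquiv.toAffineEquiv.image_extremePoints s

theorem IsometryEquiv.ext_on {s : Set E} (h_span : affineSpan ℝ s = ⊤) {f g : E ≃ᵢ F}
    (h_agree : s.EqOn f g) : f = g := by
  have := AffineEquiv.ext_on h_span f.toRealAffineIsometryEquiv.toAffineEquiv
    g.toRealAffineIsometryEquiv.toAffineEquiv h_agree
  ext x
  exact congr($this x)

theorem extremePoints_convexHull_of_subset_sphere [StrictConvexSpace ℝ E] {s : Set E}
    {x : E} {r : ℝ} (hr : r ≠ 0) (hs : s ⊆ Metric.sphere x r) :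
    (convexHull ℝ s).extremePoints ℝ = s := by
  refine extremePoints_convexHull_subset.antisymm fun v hv => ?_
  have hball : convexHull ℝ s ⊆ Metric.closedBall x r :=
    convexHull_min (hs.trans Metric.sphere_subset_closedBall) (convex_closedBall x r)
  exact inter_extremePoints_subset_extremePoints_of_subset hball
    ⟨subset_convexHull ℝ s hv,
      StrictConvexSpace.sphere_subset_extremePoints_closedBall x hr (hs hv)⟩

theorem eq_neg_of_norm_sub_eq_add [StrictConvexSpace ℝ E] {x y : E} (hxy : ‖x‖ = ‖y‖)
    (h : ‖x - y‖ = ‖x‖ + ‖y‖) : y = -x := by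
  have hray : SameRay ℝ x (-y) := by
    rwa [sameRay_iff_norm_add, ← sub_eq_add_neg, norm_neg]
  rw [hray.eq_of_norm_eq (by rw [norm_neg, hxy]), neg_neg]

end Normed

theorem affineSpan_eq_top_of_zero_mem {k V : Type*} [Ring k] [AddCommGroup V] [Module k V]
    {s : Set V} (h0 : (0 : V) ∈ affineSpan k s) (hs : Submodule.span k s = ⊤) :
    affineSpan k s = ⊤ := by
  rw [← affineSpan_insert_eq_affineSpan k h0]
  apply SetLike.coe_injective
  rw [affineSpan_insert_zero, hs, AffineSubspace.top_coe, Submodule.top_coe]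

open EuclideanSpace

variable {n : ℕ}

theorem mem_octVerts_iff {x : EuclideanSpace ℝ (Fin n)} :
    x ∈ octVerts n ↔ ∃ i, x = single i 1 ∨ x = -single i 1 := by
  simp only [octVerts, mem_union, mem_range]
  grind

theorem single_mem_octVerts (i : Fin n) : single i (1 : ℝ) ∈ octVerts n :=
  Or.inl ⟨i, rfl⟩

theorem neg_mem_octVerts {x : EuclideanSpace ℝ (Fin n)} (hx : x ∈ octVerts n) :
    -x ∈ octVerts n := by
  obtain ⟨i, rfl | rfl⟩ := mem_octVerts_iff.mp hx
  exacts [Or.inr ⟨i, rfl⟩, Or.inl ⟨i, (neg_neg _).symm⟩]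

theorem octVerts_subset_sphere : octVerts n ⊆ Metric.sphere 0 1 := by
  intro x hx
  obtain ⟨i, rfl | rfl⟩ := mem_octVerts_iff.mp hx <;> simp

theorem neg_ne_of_mem_octVerts {x : EuclideanSpace ℝ (Fin n)} (hx : x ∈ octVerts n) :
    -x ≠ x := by
  intro h
  have hx1 := octVerts_subset_sphere hx
  rw [neg_eq_iff_add_eq_zero, ← two_smul ℝ, smul_eq_zero] at h
  simp_all

theorem inner_trichotomy_of_mem_octVerts {u w : EuclideanSpace ℝ (Fin n)}
    (hu : u ∈ octVerts n) (hw : w ∈ octVerts n) :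
    inner ℝ u w = 0 ∨ inner ℝ u w = 1 ∨ inner ℝ u w = -1 := by
  obtain ⟨i, rfl | rfl⟩ := mem_octVerts_iff.mp hu <;>
  obtain ⟨j, rfl | rfl⟩ := mem_octVerts_iff.mp hw <;>
  · by_cases hij : i = j <;> simp [hij, inner_single_left]

theorem octGraph_adj_iff_inner_eq_zero {v w : octVerts n} :
    (octGraph n).Adj v w ↔ inner ℝ v.1 w.1 = 0 := by
  have hv := octVerts_subset_sphere v.2
  have hw := octVerts_subset_sphere w.2
  rw [mem_sphere_zero_iff_norm] at hv hw
  show ¬v.1 = w.1 ∧ ¬w.1 = -v.1 ↔ _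
  rw [← inner_eq_one_iff_of_norm_eq_one (𝕜 := ℝ) hv hw,
    ← inner_eq_neg_one_iff_of_norm_eq_one (𝕜 := ℝ) hw hv,
    real_inner_comm v.1 w.1]
  rcases inner_trichotomy_of_mem_octVerts v.2 w.2 with h | h | h <;> norm_num [h]

theorem zero_mem_affineSpan_octVerts (hn : 1 ≤ n) :
    (0 : EuclideanSpace ℝ (Fin n)) ∈ affineSpan ℝ (octVerts n) := by
  have he := single_mem_octVerts (⟨0, hn⟩ : Fin n)
  have hmid : midpoint ℝ _ _ ∈ affineSpan ℝ (octVerts n) :=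
    affineSpan_mono ℝ (pair_subset he (neg_mem_octVerts he))
      (AffineMap.lineMap_mem_affineSpan_pair _ _ _)
  simpa using hmid

theorem affineSpan_octVerts (hn : 1 ≤ n) : affineSpan ℝ (octVerts n) = ⊤ := by
  refine affineSpan_eq_top_of_zero_mem (zero_mem_affineSpan_octVerts hn) (eq_top_mono ?_
    (EuclideanSpace.basisFun (Fin n) ℝ).toBasis.span_eq)
  refine Submodule.span_mono (range_subset_iff.mpr fun i => ?_)
  simpa using single_mem_octVerts i

theorem extremePoints_convexHull_octVerts :
    (convexHull ℝ (octVerts n)).extremePoints ℝ = octVerts n :=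
  extremePoints_convexHull_of_subset_sphere one_ne_zero octVerts_subset_sphere

section symGroup

variable {φ : EuclideanSpace ℝ (Fin n) ≃ᵢ EuclideanSpace ℝ (Fin n)}

theorem image_octVerts_of_mem_symGroup (hφ : φ ∈ symGroup n (convexHull ℝ (octVerts n))) :
    φ '' octVerts n = octVerts n := by
  have hφ' : φ '' convexHull ℝ (octVerts n) = convexHull ℝ (octVerts n) := hφ
  rw [← extremePoints_convexHull_octVerts, φ.image_extremePoints, hφ']

theorem map_mem_octVerts_iff_of_mem_symGroup
    (hφ : φ ∈ symGroup n (convexHull ℝ (octVerts n))) (x : EuclideanSpace ℝ (Fin n)) :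
    φ x ∈ octVerts n ↔ x ∈ octVerts n := by
  simpa only [image_octVerts_of_mem_symGroup hφ] using
    φ.injective.mem_set_image (s := octVerts n)

theorem map_neg_of_mem_symGroup (hφ : φ ∈ symGroup n (convexHull ℝ (octVerts n)))
    {v : EuclideanSpace ℝ (Fin n)} (hv : v ∈ octVerts n) : φ (-v) = -φ v := by
  have hnorm {x} (hx : x ∈ octVerts n) : ‖φ x‖ = 1 := by
    simpa using octVerts_subset_sphere ((map_mem_octVerts_iff_of_mem_symGroup hφ x).mpr hx)
  refine eq_neg_of_norm_sub_eq_add ((hnorm hv).trans (hnorm (neg_mem_octVerts hv)).symm) ?_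
  rw [← dist_eq_norm, φ.dist_eq, dist_eq_norm, sub_neg_eq_add, ← two_smul ℝ, norm_smul,
    hnorm hv, hnorm (neg_mem_octVerts hv),
    mem_sphere_zero_iff_norm.mp (octVerts_subset_sphere hv)]
  norm_num

end symGroup

noncomputable def vertexPermHom (n : ℕ) :
    symGroup n (convexHull ℝ (octVerts n)) →* autGroup (octGraph n) where
  toFun φ := ⟨Equiv.Perm.subtypePerm φ.1.toEquiv (map_mem_octVerts_iff_of_mem_symGroup φ.2), by
    intro v w
    show ¬φ.1 v = φ.1 w ∧ ¬φ.1 w = -φ.1 v ↔ ¬v.1 = w.1 ∧ ¬w.1 = -v.1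
    rw [← map_neg_of_mem_symGroup φ.2 v.2, φ.1.injective.eq_iff, φ.1.injective.eq_iff]⟩
  map_one' := rfl
  map_mul' _ _ := rfl

theorem vertexPermHom_injective (hn : 1 ≤ n) : Function.Injective (vertexPermHom n) := by
  refine (injective_iff_map_eq_one _).mpr fun φ hφ => Subtype.ext ?_
  refine IsometryEquiv.ext_on (affineSpan_octVerts hn) fun x hx => ?_
  have hfix := congr((($hφ : autGroup (octGraph n)) : Equiv.Perm (octVerts n)) ⟨x, hx⟩)
  exact congrArg Subtype.val hfix

theorem map_neg_of_mem_autGroup {π : Equiv.Perm (octVerts n)} (hπ : π ∈ autGroup (octGraph n))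
    (v : octVerts n) : (π ⟨-v.1, neg_mem_octVerts v.2⟩).1 = -(π v).1 := by
  have hne : π v ≠ π ⟨-v.1, neg_mem_octVerts v.2⟩ :=
    π.injective.ne fun h => neg_ne_of_mem_octVerts v.2 (congrArg Subtype.val h).symm
  have hnadj : ¬(octGraph n).Adj (π v) (π ⟨-v.1, neg_mem_octVerts v.2⟩) :=
    (hπ _ _).not.mpr fun h => h.2 rfl
  by_contra h
  exact hnadj ⟨fun h' => hne (Subtype.ext h'), h⟩

theorem exists_linearIsometryEquiv_single_eq {ι : Type*} [Fintype ι] [DecidableEq ι]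
    {v : ι → EuclideanSpace ℝ ι} (hv : Orthonormal ℝ v) :
    ∃ L : EuclideanSpace ℝ ι ≃ₗᵢ[ℝ] EuclideanSpace ℝ ι, ∀ i, L (single i 1) = v i := by
  let B := OrthonormalBasis.mk hv
    (hv.linearIndependent.span_eq_top_of_card_eq_finrank' (by simp)).ge
  refine ⟨(EuclideanSpace.basisFun ι ℝ).equiv B (Equiv.refl ι), fun i => ?_⟩
  rw [← EuclideanSpace.basisFun_apply, OrthonormalBasis.equiv_apply_basis]
  simp [B]

theorem vertexPermHom_surjective : Function.Surjective (vertexPermHom n) := by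
  rintro ⟨π, hπ⟩
  let e (i : Fin n) : octVerts n := ⟨single i 1, single_mem_octVerts i⟩
  have hon : Orthonormal ℝ fun i => (π (e i)).1 := by
    refine orthonormal_iff_ite.mpr fun i j => ?_
    split_ifs with hij
    · subst hij
      rw [real_inner_self_eq_norm_sq,
        mem_sphere_zero_iff_norm.mp (octVerts_subset_sphere (π (e i)).2)]
      norm_num
    · rw [← octGraph_adj_iff_inner_eq_zero, hπ, octGraph_adj_iff_inner_eq_zero]
      simp [e, inner_single_left, hij]
  obtain ⟨L, hL⟩ := exists_linearIsometryEquiv_single_eq hon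
  have hLπ (v : octVerts n) : L v = π v := by
    obtain ⟨i, hi | hi⟩ := mem_octVerts_iff.mp v.2
    · rw [show v = e i from Subtype.ext hi, hL]
    · rw [show v = ⟨-(e i).1, neg_mem_octVerts (e i).2⟩ from Subtype.ext hi,
        map_neg_of_mem_autGroup hπ, map_neg, hL]
  have hLverts : L '' octVerts n = octVerts n := by
    rw [image_eq_range, funext hLπ]
    exact (π.surjective.range_comp Subtype.val).trans Subtype.range_coe
  refine ⟨⟨L.toIsometryEquiv, ?_⟩, Subtype.ext (Equiv.ext fun v => Subtype.ext (hLπ v))⟩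
  show L '' convexHull ℝ (octVerts n) = convexHull ℝ (octVerts n)
  exact (L.toLinearEquiv.toLinearMap.image_convexHull (octVerts n)).trans
    (congrArg _ hLverts)

/-- The group of symmetries of the regular hyperoctahedron `◇ⁿ = conv{±e₁,…,±eₙ}`
is isomorphic to the automorphism group of its graph. -/
theorem symGroup_hyperoctahedron_iso_autGroup_octGraph (n : ℕ) (hn : 1 ≤ n) :
    Nonempty ((symGroup n (convexHull ℝ (octVerts n))) ≃* autGroup (octGraph n)) :=
  ⟨MulEquiv.ofBijective (vertexPermHom n) ⟨vertexPermHom_injective hn, vertexPermHom_surjective⟩⟩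
end

section
/- For every n ≥ 1, the group of symmetries of the unit hypercube [0,1]^n (all surjective isometries φ of Euclidean ℝ^n with φ([0,1]^n) = [0,1]^n, under composition) is isomorphic as a group to the automorphism group of the hypercube graph Q_n, the simple graph on vertex set {0,1}^n in which two vertices are adjacent if and only if they differ in exactly one coordinate. -/
/-- The unit hypercube `[0,1]ⁿ ⊆ ℝⁿ`. -/
def unitCube (n : ℕ) : Set (EuclideanSpace ℝ (Fin n)) :=
  {x | ∀ i, x i ∈ Set.Icc (0 : ℝ) 1}

/-- The vertex set `{0,1}ⁿ ⊆ ℝⁿ` of the unit hypercube. -/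
def cubeVerts (n : ℕ) : Set (EuclideanSpace ℝ (Fin n)) :=
  {x | ∀ i, x i = 0 ∨ x i = 1}

/-- The hypercube graph `Qₙ`: vertices `{0,1}ⁿ`, two vertices being adjacent iff
they differ in exactly one coordinate. -/
def cubeGraph (n : ℕ) : SimpleGraph (cubeVerts n) where
  Adj v w := (Finset.univ.filter fun i => v.1 i ≠ w.1 i).card = 1
  symm := by
    refine ⟨fun v w h => ?_⟩
    beta_reduce at h ⊢
    have : (Finset.univ.filter fun i => w.1 i ≠ v.1 i)
        = (Finset.univ.filter fun i => v.1 i ≠ w.1 i) := by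
      ext i; simp [ne_comm]
    rw [this]; exact h
  loopless := by refine ⟨fun v h => ?_⟩; simp at h

/-!
Restricting a symmetry of the cube to `{0,1}ⁿ` gives an automorphism of `Qₙ`: vertices are
the points of the cube at distance `√n` (its diameter) from another point of the cube, and on
vertices the squared Euclidean distance is the Hamming distance, so adjacency means distance `1`.
Conversely the Hamming distance is the graph distance of `Qₙ`, so automorphisms preserve
Euclidean distances between vertices. A point `x` of `ℝⁿ` is determined by its distances to
`0` and to the unit vectors, since `|x - eᵢ|² = |x|² - 2xᵢ + 1`. Hence a symmetry fixing all
vertices is the identity, and an automorphism fixing `0` (which we may arrange by composing with a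
reflection) permutes the `eᵢ` by some `σ` and agrees with the coordinate permutation by `σ`.
-/

open Finset

namespace UnitCube

variable {n : ℕ}

local notation "ℝⁿ" => EuclideanSpace ℝ (Fin n)

lemma dist_single_one_sq (x : ℝⁿ) (i : Fin n) :
    dist x (EuclideanSpace.single i 1) ^ 2 = dist x 0 ^ 2 - 2 * x i + 1 := by
  rw [dist_eq_norm, dist_zero_right, norm_sub_sq_real, EuclideanSpace.inner_single_right,
    PiLp.norm_single]
  simp

lemma coord_eq_of_dist_eq {x y : ℝⁿ} {i j : Fin n} (h₀ : dist x 0 = dist y 0)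
    (h : dist x (EuclideanSpace.single i 1) = dist y (EuclideanSpace.single j 1)) :
    x i = y j := by
  have := dist_single_one_sq x i
  have := dist_single_one_sq y j
  rw [h, h₀] at *
  linarith

lemma dist_sq_eq_hammingDist {v w : ℝⁿ} (hv : v ∈ cubeVerts n) (hw : w ∈ cubeVerts n) :
    dist v w ^ 2 = hammingDist v.ofLp w.ofLp := by
  rw [EuclideanSpace.dist_eq, Real.sq_sqrt (by positivity), hammingDist, card_filter,
    Nat.cast_sum]
  refine sum_congr rfl fun i _ => ?_
  rcases hv i with h | h <;> rcases hw i with h' | h' <;> simp [h, h']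

lemma mem_symGroup_of_mapsTo {A : Set ℝⁿ} {φ : ℝⁿ ≃ᵢ ℝⁿ} (h : Set.MapsTo φ A A)
    (h' : Set.MapsTo φ.symm A A) : φ ∈ symGroup n A :=
  h.image_subset.antisymm fun y hy => ⟨φ.symm y, h' hy, φ.apply_symm_apply y⟩

noncomputable def reflect (s : Finset (Fin n)) : ℝⁿ ≃ᵢ ℝⁿ where
  toEquiv := Function.Involutive.toPerm
    (fun x => WithLp.toLp 2 fun i => if i ∈ s then 1 - x i else x i)
    fun x => by ext i; by_cases hi : i ∈ s <;> simp [hi]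
  isometry_toFun := Isometry.of_dist_eq fun x y => by
    simp only [EuclideanSpace.dist_eq]
    congr 1
    refine sum_congr rfl fun i _ => ?_
    by_cases hi : i ∈ s <;> simp only [Function.Involutive.toPerm, WithLp.ofLp_toLp, hi,
      if_true, if_false, dist_sub_left]

lemma reflect_apply (s : Finset (Fin n)) (x : ℝⁿ) (i : Fin n) :
    reflect s x i = if i ∈ s then 1 - x i else x i := rfl

lemma reflect_symm (s : Finset (Fin n)) : (reflect s).symm = reflect s := rfl

lemma reflect_mem_symGroup (s : Finset (Fin n)) : reflect s ∈ symGroup n (unitCube n) := by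
  have h : Set.MapsTo (reflect s) (unitCube n) (unitCube n) := fun x hx i => by
    rw [reflect_apply]
    obtain ⟨h₀, h₁⟩ := hx i
    split_ifs <;> constructor <;> linarith
  exact mem_symGroup_of_mapsTo h (reflect_symm s ▸ h)

noncomputable def permute (σ : Equiv.Perm (Fin n)) : ℝⁿ ≃ᵢ ℝⁿ :=
  (LinearIsometryEquiv.piLpCongrLeft 2 ℝ ℝ σ).toIsometryEquiv

lemma permute_apply (σ : Equiv.Perm (Fin n)) (x : ℝⁿ) (i : Fin n) :
    permute σ x i = x (σ.symm i) := rfl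

lemma permute_symm (σ : Equiv.Perm (Fin n)) : (permute σ).symm = permute σ.symm := by
  rw [permute, permute, ← LinearIsometryEquiv.piLpCongrLeft_symm]; rfl

lemma permute_mem_symGroup (σ : Equiv.Perm (Fin n)) : permute σ ∈ symGroup n (unitCube n) := by
  have h (τ : Equiv.Perm (Fin n)) : Set.MapsTo (permute τ) (unitCube n) (unitCube n) :=
    fun x hx i => hx (τ.symm i)
  exact mem_symGroup_of_mapsTo (h σ) (permute_symm σ ▸ h σ.symm)

lemma cubeVerts_subset_unitCube : cubeVerts n ⊆ unitCube n := fun v hv i => by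
  rcases hv i with h | h <;> simp [h]

lemma zero_mem_cubeVerts : (0 : ℝⁿ) ∈ cubeVerts n := fun _ => Or.inl rfl

lemma single_mem_cubeVerts (i : Fin n) : EuclideanSpace.single i (1 : ℝ) ∈ cubeVerts n :=
  fun j => by by_cases h : j = i <;> simp [h]

lemma mem_cubeVerts_of_dist_sq {x y : ℝⁿ} (hx : x ∈ unitCube n) (hy : y ∈ unitCube n)
    (h : n ≤ dist x y ^ 2) : x ∈ cubeVerts n := by
  have hle (i : Fin n) : (x i - y i) ^ 2 ≤ 1 := by
    obtain ⟨hx₀, hx₁⟩ := hx i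
    obtain ⟨hy₀, hy₁⟩ := hy i
    nlinarith
  have heq : ∀ i ∈ univ, (x i - y i) ^ 2 = 1 := by
    refine (sum_eq_sum_iff_of_le fun i _ => hle i).1
      (le_antisymm (sum_le_sum fun i _ => hle i) ?_)
    rw [EuclideanSpace.dist_eq, Real.sq_sqrt (by positivity)] at h
    simpa [Real.dist_eq] using h
  intro i
  obtain ⟨hx₀, hx₁⟩ := hx i
  obtain ⟨hy₀, hy₁⟩ := hy i
  have : (x i - y i - 1) * (x i - y i + 1) = 0 := by linear_combination heq i (mem_univ i)
  rcases mul_eq_zero.1 this with h | h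
  · right; linarith
  · left; linarith

lemma dist_reflect_univ_sq {v : ℝⁿ} (hv : v ∈ cubeVerts n) : dist v (reflect univ v) ^ 2 = n := by
  rw [EuclideanSpace.dist_eq, Real.sq_sqrt (by positivity)]
  have h (i : Fin n) : dist (v i) (reflect univ v i) ^ 2 = 1 := by
    rw [reflect_apply, if_pos (mem_univ i), Real.dist_eq]
    rcases hv i with h | h <;> norm_num [h]
  simp [h]

lemma mapsTo_cubeVerts {φ : ℝⁿ ≃ᵢ ℝⁿ} (hφ : φ ∈ symGroup n (unitCube n)) :
    Set.MapsTo φ (cubeVerts n) (cubeVerts n) := fun v hv => by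
  have hmaps : Set.MapsTo φ (unitCube n) (unitCube n) := Set.mapsTo_iff_image_subset.2 hφ.le
  have hv' := cubeVerts_subset_unitCube hv
  have hv'' : reflect univ v ∈ unitCube n := (reflect_mem_symGroup univ).le ⟨v, hv', rfl⟩
  refine mem_cubeVerts_of_dist_sq (hmaps hv') (hmaps hv'') ?_
  rw [φ.dist_eq, dist_reflect_univ_sq hv]

lemma cubeGraph_adj_iff_dist {v w : cubeVerts n} :
    (cubeGraph n).Adj v w ↔ dist (v : ℝⁿ) w = 1 := by
  change hammingDist v.1.ofLp w.1.ofLp = 1 ↔ _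
  rw [← pow_left_inj₀ dist_nonneg zero_le_one two_ne_zero, dist_sq_eq_hammingDist v.2 w.2,
    one_pow, Nat.cast_eq_one]

lemma hammingDist_le_length {u v : cubeVerts n} (p : (cubeGraph n).Walk u v) :
    hammingDist u.1.ofLp v.1.ofLp ≤ p.length := by
  induction p with
  | nil => simp
  | @cons u v w hadj p ih =>
    have huv : hammingDist u.1.ofLp v.1.ofLp = 1 := hadj
    grw [SimpleGraph.Walk.length_cons, hammingDist_triangle _ v.1.ofLp, huv, ih, add_comm]

noncomputable def updateVert (u v : cubeVerts n) (i : Fin n) : cubeVerts n :=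
  ⟨WithLp.toLp 2 (Function.update u.1.ofLp i (v.1 i)), fun j => by
    by_cases h : j = i
    · subst h; simpa using v.2 j
    · simpa [h] using u.2 j⟩

lemma exists_walk_length_eq_hammingDist (u v : cubeVerts n) :
    ∃ p : (cubeGraph n).Walk u v, p.length = hammingDist u.1.ofLp v.1.ofLp := by
  induction h : hammingDist u.1.ofLp v.1.ofLp generalizing u with
  | zero =>
    obtain rfl : u = v := Subtype.ext (WithLp.ofLp_injective 2 (hammingDist_eq_zero.1 h))
    exact ⟨.nil, rfl⟩
  | succ k ih =>
    obtain ⟨i, hi⟩ : ∃ i, u.1 i ≠ v.1 i := by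
      by_contra! hc
      simp [hammingDist, hc] at h
    have hadj : (cubeGraph n).Adj u (updateVert u v i) := by
      change hammingDist _ _ = 1
      rw [hammingDist, card_eq_one]
      refine ⟨i, ext fun j => ?_⟩
      simp only [mem_filter, mem_univ, true_and, mem_singleton]
      by_cases hj : j = i <;> simp [updateVert, hj, hi]
    have hk : hammingDist (updateVert u v i).1.ofLp v.1.ofLp = k := by
      rw [hammingDist] at h ⊢
      rw [← Nat.add_right_cancel_iff (n := 1), ← h,
        ← card_erase_add_one (s := {j | u.1 j ≠ v.1 j}) (a := i) (by simpa using hi)]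
      congr 2
      ext j
      simp only [mem_filter, mem_univ, true_and, mem_erase]
      by_cases hj : j = i <;> simp [updateVert, hj]
    obtain ⟨p, hp⟩ := ih _ hk
    exact ⟨.cons hadj p, by simp [hp]⟩

lemma hammingDist_le_of_mem_autGroup {π : Equiv.Perm (cubeVerts n)}
    (hπ : π ∈ autGroup (cubeGraph n)) (u v : cubeVerts n) :
    hammingDist (π u).1.ofLp (π v).1.ofLp ≤ hammingDist u.1.ofLp v.1.ofLp := by
  obtain ⟨p, hp⟩ := exists_walk_length_eq_hammingDist u v
  let f : cubeGraph n →g cubeGraph n := ⟨π, (hπ _ _).2⟩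
  rw [← hp, ← SimpleGraph.Walk.length_map f]
  exact hammingDist_le_length _

lemma mem_autGroup_cubeGraph_iff {π : Equiv.Perm (cubeVerts n)} :
    π ∈ autGroup (cubeGraph n) ↔ ∀ v w, dist (π v : ℝⁿ) (π w) = dist (v : ℝⁿ) w := by
  refine ⟨fun hπ v w => ?_, fun h v w => by simp only [cubeGraph_adj_iff_dist, h]⟩
  have hham : hammingDist (π v).1.ofLp (π w).1.ofLp = hammingDist v.1.ofLp w.1.ofLp := by
    refine (hammingDist_le_of_mem_autGroup hπ v w).antisymm ?_
    simpa using hammingDist_le_of_mem_autGroup (inv_mem hπ) (π v) (π w)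
  rw [← pow_left_inj₀ dist_nonneg dist_nonneg two_ne_zero, dist_sq_eq_hammingDist (π v).2 (π w).2,
    dist_sq_eq_hammingDist v.2 w.2, hham]

noncomputable def restrictHom : symGroup n (unitCube n) →* autGroup (cubeGraph n) where
  toFun φ := ⟨Equiv.Perm.subtypePerm φ.1.toEquiv fun _ =>
      ⟨fun h => by simpa using mapsTo_cubeVerts (inv_mem φ.2) h, fun h => mapsTo_cubeVerts φ.2 h⟩,
    mem_autGroup_cubeGraph_iff.2 fun v w => φ.1.dist_eq v w⟩
  map_one' := rfl
  map_mul' _ _ := rfl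

lemma restrictHom_apply (φ : symGroup n (unitCube n)) (v : cubeVerts n) :
    ((restrictHom φ : Equiv.Perm (cubeVerts n)) v : ℝⁿ) = φ.1 v := rfl

lemma restrictHom_injective : Function.Injective (restrictHom (n := n)) := by
  refine (injective_iff_map_eq_one _).2 fun φ h => ?_
  have hfix (v : ℝⁿ) (hv : v ∈ cubeVerts n) : φ.1 v = v :=
    congrArg (fun π : autGroup (cubeGraph n) => ((π : Equiv.Perm (cubeVerts n)) ⟨v, hv⟩ : ℝⁿ)) h
  refine Subtype.ext <| IsometryEquiv.ext fun x => PiLp.ext fun i =>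
    (coord_eq_of_dist_eq ?_ ?_ : φ.1 x i = x i)
  · simpa only [hfix 0 zero_mem_cubeVerts] using φ.1.dist_eq x 0
  · simpa only [hfix _ (single_mem_cubeVerts i)] using φ.1.dist_eq x (EuclideanSpace.single i 1)

lemma exists_eq_single_of_dist_zero {v : ℝⁿ} (hv : v ∈ cubeVerts n) (h : dist v 0 = 1) :
    ∃ k, v = EuclideanSpace.single k 1 := by
  have hnorm : hammingNorm v.ofLp = 1 := by
    have := dist_sq_eq_hammingDist hv zero_mem_cubeVerts
    rw [h, WithLp.ofLp_zero, hammingDist_zero_right] at this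
    exact_mod_cast this.symm
  obtain ⟨k, hk⟩ := card_eq_one.1 hnorm
  refine ⟨k, PiLp.ext fun i => ?_⟩
  have hi : v i ≠ 0 ↔ i = k := by simpa using congrArg (i ∈ ·) hk
  by_cases hik : i = k
  · subst hik
    simp [(hv i).resolve_left (hi.2 rfl)]
  · simpa [hik] using hi.not.2 hik

lemma mem_range_restrictHom_of_map_zero (π : autGroup (cubeGraph n))
    (h₀ : (π : Equiv.Perm (cubeVerts n)) ⟨0, zero_mem_cubeVerts⟩ = ⟨0, zero_mem_cubeVerts⟩) :
    π ∈ restrictHom.range := by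
  obtain ⟨π, hmem⟩ := π
  have hπ := mem_autGroup_cubeGraph_iff.1 hmem
  have hdist₀ (v : cubeVerts n) : dist (π v : ℝⁿ) 0 = dist (v : ℝⁿ) 0 := by
    simpa [h₀] using hπ v ⟨0, zero_mem_cubeVerts⟩
  have himage (j : Fin n) : ∃ k, (π ⟨_, single_mem_cubeVerts j⟩ : ℝⁿ) = EuclideanSpace.single k 1 :=
    exists_eq_single_of_dist_zero (Subtype.prop _) (by simp [hdist₀])
  choose f hf using himage
  have hinj : Function.Injective f := fun j k hjk => by
    have := congrArg (fun v : cubeVerts n => (v : ℝⁿ) j)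
      (π.injective (Subtype.ext ((hf j).trans (hjk ▸ hf k).symm)))
    by_contra hne
    simp [hne] at this
  set σ := Equiv.ofBijective f (Finite.injective_iff_bijective.1 hinj)
  refine ⟨⟨permute σ, permute_mem_symGroup σ⟩, Subtype.ext <| Equiv.ext fun v => Subtype.ext <|
    PiLp.ext fun i => ?_⟩
  obtain ⟨j, rfl⟩ := σ.surjective i
  rw [restrictHom_apply, permute_apply, σ.symm_apply_apply]
  refine (coord_eq_of_dist_eq (hdist₀ v) ?_).symm
  simpa [σ, hf] using hπ v ⟨_, single_mem_cubeVerts j⟩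

lemma restrictHom_surjective : Function.Surjective (restrictHom (n := n)) := by
  intro π
  set w := (π : Equiv.Perm (cubeVerts n)) ⟨0, zero_mem_cubeVerts⟩
  set R : symGroup n (unitCube n) := ⟨reflect {i | w.1 i = 1}, reflect_mem_symGroup _⟩
  have hR : (restrictHom R : Equiv.Perm (cubeVerts n)) ⟨0, zero_mem_cubeVerts⟩ = w := by
    refine Subtype.ext <| PiLp.ext fun i => ?_
    rw [restrictHom_apply]
    rcases w.2 i with h | h <;> simp [R, reflect_apply, h]
  obtain ⟨P, hP⟩ := mem_range_restrictHom_of_map_zero ((restrictHom R)⁻¹ * π) <| by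
    rw [Subgroup.coe_mul, Subgroup.coe_inv, Equiv.Perm.mul_apply, Equiv.Perm.inv_eq_iff_eq, hR]
  exact ⟨R * P, by rw [map_mul, hP, mul_inv_cancel_left]⟩

end UnitCube

theorem symGroup_unitCube_iso_autGroup_cubeGraph_general (n : ℕ) :
    Nonempty ((symGroup n (unitCube n)) ≃* autGroup (cubeGraph n)) :=
  ⟨MulEquiv.ofBijective UnitCube.restrictHom
    ⟨UnitCube.restrictHom_injective, UnitCube.restrictHom_surjective⟩⟩

/-- The group of symmetries of the unit hypercube `[0,1]ⁿ` is isomorphic to the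
automorphism group of the hypercube graph `Qₙ`. -/
theorem symGroup_unitCube_iso_autGroup_cubeGraph (n : ℕ) (hn : 1 ≤ n) :
    Nonempty ((symGroup n (unitCube n)) ≃* autGroup (cubeGraph n)) :=
  symGroup_unitCube_iso_autGroup_cubeGraph_general n
end

section
/- For every n ≥ 1, the group of symmetries of the unit hypercube [0,1]^n in Euclidean ℝ^n (all surjective isometries φ of ℝ^n with φ([0,1]^n) = [0,1]^n, under composition) is finite of order 2^n · n!. -/
/-! ### Auxiliary: signed permutation isometries -/

/-- The signed-permutation affine map of the cube. -/
def Fmap {n : ℕ} (s : Fin n → Bool) (σ : Equiv.Perm (Fin n)) :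
    EuclideanSpace ℝ (Fin n) → EuclideanSpace ℝ (Fin n) :=
  fun x => WithLp.toLp 2 (fun j => if s j then x (σ j) else 1 - x (σ j))

lemma Fmap_isometry {n : ℕ} (s : Fin n → Bool) (σ : Equiv.Perm (Fin n)) :
    Isometry (Fmap s σ) := by
  refine Isometry.of_dist_eq fun x y => ?_
  rw [EuclideanSpace.dist_eq, EuclideanSpace.dist_eq]
  congr 1
  rw [← Equiv.sum_comp σ (fun i => dist (x i) (y i) ^ 2)]
  refine Finset.sum_congr rfl fun j _ => ?_
  simp only [Fmap, Real.dist_eq, PiLp.toLp_apply]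
  by_cases h : s j <;> simp [h, abs_sub_comm]

lemma Fmap_Fmap {n : ℕ} (s : Fin n → Bool) (σ : Equiv.Perm (Fin n)) (x) :
    Fmap (s ∘ σ.symm) σ.symm (Fmap s σ x) = x := by
  ext i
  simp only [Fmap, Function.comp, PiLp.toLp_apply]
  rw [σ.apply_symm_apply]
  by_cases h : s (σ.symm i) <;> simp [h]

lemma Fmap_Fmap' {n : ℕ} (s : Fin n → Bool) (σ : Equiv.Perm (Fin n)) (y) :
    Fmap s σ (Fmap (s ∘ σ.symm) σ.symm y) = y := by
  ext j
  simp only [Fmap, Function.comp, PiLp.toLp_apply]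
  rw [σ.symm_apply_apply]
  by_cases h : s j <;> simp [h]

/-- The signed-permutation map as an isometry equivalence. -/
noncomputable def FIso {n : ℕ} (s : Fin n → Bool) (σ : Equiv.Perm (Fin n)) :
    EuclideanSpace ℝ (Fin n) ≃ᵢ EuclideanSpace ℝ (Fin n) where
  toFun := Fmap s σ
  invFun := Fmap (s ∘ σ.symm) σ.symm
  left_inv := Fmap_Fmap s σ
  right_inv := Fmap_Fmap' s σ
  isometry_toFun := Fmap_isometry s σ

lemma Fmap_mem_cube {n : ℕ} (s : Fin n → Bool) (σ : Equiv.Perm (Fin n))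
    {x : EuclideanSpace ℝ (Fin n)} (hx : x ∈ unitCube n) : Fmap s σ x ∈ unitCube n := by
  intro j
  have h1 := hx (σ j)
  simp only [Set.mem_Icc] at h1 ⊢
  simp only [Fmap, PiLp.toLp_apply]
  by_cases h : s j <;> simp [h] <;> constructor <;> linarith [h1.1, h1.2]

lemma FIso_mem {n : ℕ} (s : Fin n → Bool) (σ : Equiv.Perm (Fin n)) :
    FIso s σ ∈ symGroup n (unitCube n) := by
  show ⇑(FIso s σ) '' unitCube n = unitCube n
  apply Set.Subset.antisymm
  · rintro _ ⟨x, hx, rfl⟩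
    exact Fmap_mem_cube s σ hx
  · intro y hy
    exact ⟨Fmap (s ∘ σ.symm) σ.symm y, Fmap_mem_cube _ _ hy, Fmap_Fmap' s σ y⟩

/-- The classifying map. -/
noncomputable def Phi (n : ℕ) : (Fin n → Bool) × Equiv.Perm (Fin n) → symGroup n (unitCube n) :=
  fun p => ⟨FIso p.1 p.2, FIso_mem p.1 p.2⟩

lemma Phi_injective (n : ℕ) : Function.Injective (Phi n) := by
  rintro ⟨s, σ⟩ ⟨s', σ'⟩ h
  have hIso : FIso s σ = FIso s' σ' := Subtype.ext_iff.mp h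
  have hfun : ∀ x, Fmap s σ x = Fmap s' σ' x := fun x => by
    have := congrArg (fun (ψ : EuclideanSpace ℝ (Fin n) ≃ᵢ EuclideanSpace ℝ (Fin n)) => ψ x) hIso
    simpa [FIso] using this
  have hs : s = s' := by
    funext j
    have := congrFun (congrArg WithLp.ofLp (hfun 0)) j
    simp only [Fmap, PiLp.toLp_apply] at this
    by_cases h1 : s j <;> by_cases h2 : s' j <;> simp_all
  subst hs
  have hσ : σ = σ' := by
    apply Equiv.ext
    intro j
    by_contra hne
    have := congrFun (congrArg WithLp.ofLp (hfun (EuclideanSpace.single (σ j) 1))) j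
    have hne' : ¬ (σ' j = σ j) := fun hc => hne hc.symm
    simp only [Fmap, PiLp.toLp_apply, EuclideanSpace.single_apply, hne', if_true, if_false, eq_self_iff_true] at this
    by_cases h1 : s j <;> simp [h1] at this
  rw [hσ]
lemma eucl_dist_sq {n : ℕ} (x y : EuclideanSpace ℝ (Fin n)) :
    dist x y ^ 2 = ∑ i, (x i - y i) ^ 2 := by
  rw [EuclideanSpace.dist_eq, Real.sq_sqrt (by positivity)]
  exact Finset.sum_congr rfl fun i _ => by rw [Real.dist_eq, sq_abs]

noncomputable def cubeCenter (n : ℕ) : EuclideanSpace ℝ (Fin n) := WithLp.toLp 2 (fun _ => 1/2)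

@[simp] lemma cubeCenter_apply {n : ℕ} (i : Fin n) : cubeCenter n i = 1/2 := rfl

lemma dist_center_le {n : ℕ} {x : EuclideanSpace ℝ (Fin n)} (hx : x ∈ unitCube n) :
    dist (cubeCenter n) x ^ 2 ≤ n / 4 := by
  rw [eucl_dist_sq]
  calc ∑ i, (cubeCenter n i - x i) ^ 2 ≤ ∑ _i : Fin n, (1/4 : ℝ) := by
        refine Finset.sum_le_sum fun i _ => ?_
        have h := hx i
        simp only [Set.mem_Icc] at h
        simp only [cubeCenter_apply]
        nlinarith [h.1, h.2]
    _ = n / 4 := by simp [Finset.sum_const]; ring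

lemma center_unique {n : ℕ} (y : EuclideanSpace ℝ (Fin n))
    (hy : ∀ x ∈ unitCube n, dist y x ^ 2 ≤ n / 4) : y = cubeCenter n := by
  classical
  set v : EuclideanSpace ℝ (Fin n) := WithLp.toLp 2 (fun i => if 1/2 ≤ y i then (0:ℝ) else 1) with hv
  have hvmem : v ∈ unitCube n := by
    intro i
    simp only [hv, PiLp.toLp_apply, Set.mem_Icc]
    split <;> norm_num
  have hsum := hy v hvmem
  rw [eucl_dist_sq] at hsum
  ext i
  by_contra hne
  have hterm : ∀ j, (1/4 : ℝ) ≤ (y j - v j) ^ 2 := by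
    intro j
    simp only [hv, PiLp.toLp_apply]
    split <;> rename_i h <;> nlinarith [h]
  have hstrict : (1/4 : ℝ) < (y i - v i) ^ 2 := by
    simp only [hv, PiLp.toLp_apply]
    have : y i ≠ 1/2 := fun h => hne (by simp [h])
    split <;> rename_i h
    · have : 1/2 < y i := lt_of_le_of_ne h (Ne.symm this)
      nlinarith
    · push_neg at h
      nlinarith
  have : (n : ℝ) / 4 < ∑ j, (y j - v j) ^ 2 := by
    calc (n : ℝ) / 4 = ∑ _j : Fin n, (1/4 : ℝ) := by simp [Finset.sum_const]; ring
    _ < ∑ j, (y j - v j) ^ 2 :=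
        Finset.sum_lt_sum (fun j _ => hterm j) ⟨i, Finset.mem_univ i, hstrict⟩
  linarith

lemma scaled_bound {n : ℕ} (L : EuclideanSpace ℝ (Fin n) ≃ₗᵢ[ℝ] EuclideanSpace ℝ (Fin n))
    (hK : ∀ x : EuclideanSpace ℝ (Fin n), (∀ i, |x i| ≤ 1/2) → ∀ i, |L x i| ≤ 1/2)
    (a : ℝ) (ha : 0 < a) (x : EuclideanSpace ℝ (Fin n)) (hx : ∀ i, |x i| ≤ a) :
    ∀ i, |L x i| ≤ a := by
  intro i
  have h2a : (0:ℝ) < 2 * a := by linarith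
  have h := hK ((2*a)⁻¹ • x) (fun j => by
    rw [PiLp.smul_apply, smul_eq_mul, abs_mul, abs_inv, abs_of_pos h2a,
      inv_mul_le_iff₀ h2a]
    calc |x j| ≤ a := hx j
    _ = 2 * a * (1/2) := by ring) i
  rw [map_smul, PiLp.smul_apply, smul_eq_mul, abs_mul, abs_inv, abs_of_pos h2a,
    inv_mul_le_iff₀ h2a] at h
  linarith

lemma single_image {n : ℕ} (hn : 1 ≤ n)
    (L : EuclideanSpace ℝ (Fin n) ≃ₗᵢ[ℝ] EuclideanSpace ℝ (Fin n))
    (hK : ∀ x : EuclideanSpace ℝ (Fin n), (∀ i, |x i| ≤ 1/2) → ∀ i, |L x i| ≤ 1/2)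
    (hK' : ∀ x : EuclideanSpace ℝ (Fin n), (∀ i, |x i| ≤ 1/2) → ∀ i, |L.symm x i| ≤ 1/2)
    (i : Fin n) :
    ∃ j0, ((L (EuclideanSpace.single i 1)) j0 = 1 ∨ (L (EuclideanSpace.single i 1)) j0 = -1)
      ∧ ∀ j ≠ j0, L (EuclideanSpace.single i 1) j = 0 := by
  haveI : Nonempty (Fin n) := ⟨⟨0, hn⟩⟩
  set u := L (EuclideanSpace.single i (1:ℝ)) with hu
  have hsum : ∑ j, u j ^ 2 = 1 := by
    have h1 : ‖u‖ = 1 := by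
      rw [hu, L.norm_map, EuclideanSpace.norm_single]; norm_num
    rw [EuclideanSpace.norm_eq, Real.sqrt_eq_one] at h1
    simpa [Real.norm_eq_abs, sq_abs] using h1
  have H : (Finset.univ : Finset (Fin n)).Nonempty := Finset.univ_nonempty
  obtain ⟨j0, -, hj0⟩ := Finset.exists_mem_eq_sup' H (fun j => |u j|)
  have hle : ∀ j, |u j| ≤ |u j0| := fun j =>
    hj0 ▸ Finset.le_sup' (fun k => |u k|) (Finset.mem_univ j)
  have hapos : 0 < |u j0| := by
    by_contra hc
    push_neg at hc
    have hz : ∀ j, u j = 0 := fun j =>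
      abs_eq_zero.mp (le_antisymm (le_trans (hle j) hc) (abs_nonneg _))
    simp [hz] at hsum
  have h1a : (1:ℝ) ≤ |u j0| := by
    have hs := scaled_bound L.symm hK' _ hapos u hle i
    rw [hu, L.symm_apply_apply, EuclideanSpace.single_apply, if_pos rfl] at hs
    simpa using hs
  refine ⟨j0, ?_, ?_⟩
  · rw [← sq_eq_one_iff]
    have h1 : 1 ≤ u j0 ^ 2 := by
      rw [← sq_abs, ← hj0]; nlinarith
    have h2 : u j0 ^ 2 + ∑ j ∈ Finset.univ.erase j0, u j ^ 2 = 1 := by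
      rw [Finset.add_sum_erase Finset.univ (fun k => u k ^ 2) (Finset.mem_univ j0)]; exact hsum
    have h3 : (0:ℝ) ≤ ∑ j ∈ Finset.univ.erase j0, u j ^ 2 :=
      Finset.sum_nonneg fun j _ => sq_nonneg _
    linarith
  · intro j hj
    have h1 : 1 ≤ u j0 ^ 2 := by
      rw [← sq_abs, ← hj0]; nlinarith
    have h2 : u j0 ^ 2 + ∑ k ∈ Finset.univ.erase j0, u k ^ 2 = 1 := by
      rw [Finset.add_sum_erase Finset.univ (fun k => u k ^ 2) (Finset.mem_univ j0)]; exact hsum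
    have h3 : ∑ k ∈ Finset.univ.erase j0, u k ^ 2 = 0 := by
      have : (0:ℝ) ≤ ∑ k ∈ Finset.univ.erase j0, u k ^ 2 :=
        Finset.sum_nonneg fun k _ => sq_nonneg _
      linarith
    have h4 := (Finset.sum_eq_zero_iff_of_nonneg (fun k _ => sq_nonneg (u k))).mp h3 j
      (Finset.mem_erase.mpr ⟨hj, Finset.mem_univ j⟩)
    exact pow_eq_zero_iff (by norm_num) |>.mp h4

open scoped RealInnerProductSpace

lemma tau_inj {n : ℕ} (L : EuclideanSpace ℝ (Fin n) ≃ₗᵢ[ℝ] EuclideanSpace ℝ (Fin n))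
    (τ : Fin n → Fin n)
    (h1 : ∀ i, (L (EuclideanSpace.single i 1)) (τ i) = 1 ∨ (L (EuclideanSpace.single i 1)) (τ i) = -1)
    (h2 : ∀ i, ∀ j ≠ τ i, L (EuclideanSpace.single i 1) j = 0) :
    Function.Injective τ := by
  intro i i' hii'
  by_contra hne
  have hinner : ⟪L (EuclideanSpace.single i (1:ℝ)), L (EuclideanSpace.single i' (1:ℝ))⟫ = 0 := by
    rw [L.inner_map_map, EuclideanSpace.inner_single_left]
    simp [EuclideanSpace.single_apply, hne]
  rw [PiLp.inner_apply] at hinner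
  have hterm : ∑ j, ⟪L (EuclideanSpace.single i (1:ℝ)) j, L (EuclideanSpace.single i' (1:ℝ)) j⟫
      = ⟪L (EuclideanSpace.single i (1:ℝ)) (τ i), L (EuclideanSpace.single i' (1:ℝ)) (τ i)⟫ := by
    refine Finset.sum_eq_single (τ i) (fun j _ hj => ?_) (fun h => absurd (Finset.mem_univ _) h)
    rw [h2 i j hj]
    simp
  rw [hterm] at hinner
  have ha := h1 i
  have hb := h1 i'
  rw [← hii'] at hb
  simp only [RCLike.inner_apply, conj_trivial] at hinner
  rcases ha with ha | ha <;> rcases hb with hb | hb <;> rw [ha, hb] at hinner <;> norm_num at hinner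

lemma eucl_sum_single {n : ℕ} (x : EuclideanSpace ℝ (Fin n)) :
    x = ∑ i, x i • EuclideanSpace.single i (1:ℝ) := by
  have h := (EuclideanSpace.basisFun (Fin n) ℝ).toBasis.sum_repr x
  simp only [EuclideanSpace.basisFun_repr, OrthonormalBasis.coe_toBasis,
    EuclideanSpace.basisFun_apply] at h
  exact h.symm

lemma L_apply_formula {n : ℕ} (L : EuclideanSpace ℝ (Fin n) ≃ₗᵢ[ℝ] EuclideanSpace ℝ (Fin n))
    (τ : Fin n → Fin n) (hinj : Function.Injective τ)
    (h2 : ∀ i, ∀ j ≠ τ i, L (EuclideanSpace.single i 1) j = 0)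
    (x : EuclideanSpace ℝ (Fin n)) (i : Fin n) :
    L x (τ i) = x i * L (EuclideanSpace.single i 1) (τ i) := by
  conv_lhs => rw [eucl_sum_single x]
  rw [map_sum]
  have happ : (∑ k, L (x k • EuclideanSpace.single k (1:ℝ))) (τ i)
      = ∑ k, (L (x k • EuclideanSpace.single k (1:ℝ))) (τ i) := by
    rw [WithLp.ofLp_sum, Finset.sum_apply]
  rw [happ]
  rw [Finset.sum_eq_single i (fun k _ hk => ?_) (fun h => absurd (Finset.mem_univ _) h)]
  · rw [map_smul, PiLp.smul_apply, smul_eq_mul]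
  · rw [map_smul, PiLp.smul_apply, smul_eq_mul, h2 k (τ i) (fun hc => hk (hinj hc).symm), mul_zero]

lemma Phi_surjective (n : ℕ) (hn : 1 ≤ n) : Function.Surjective (Phi n) := by
  rintro ⟨φ, hφ⟩
  have hφ' : ⇑φ '' unitCube n = unitCube n := hφ
  have hmemiff : ∀ y, φ y ∈ unitCube n ↔ y ∈ unitCube n := by
    intro y
    constructor
    · intro h
      rw [← hφ'] at h
      obtain ⟨x, hx, hxy⟩ := h
      rwa [← φ.injective hxy]
    · intro h; rw [← hφ']; exact ⟨y, h, rfl⟩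
  have hc : φ (cubeCenter n) = cubeCenter n := by
    apply center_unique
    intro x hx
    have hx' : φ.symm x ∈ unitCube n := by
      rw [← hmemiff]; simpa using hx
    have hdd : dist (φ (cubeCenter n)) x = dist (cubeCenter n) (φ.symm x) := by
      conv_lhs => rw [← φ.apply_symm_apply x]
      exact φ.dist_eq _ _
    rw [hdd]
    exact dist_center_le hx'
  set ψ : EuclideanSpace ℝ (Fin n) ≃ᵢ EuclideanSpace ℝ (Fin n) :=
    ((IsometryEquiv.addRight (cubeCenter n)).trans φ).trans
      (IsometryEquiv.addRight (-(cubeCenter n))) with hψ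
  have hψ0 : ψ 0 = 0 := by
    simp [hψ, IsometryEquiv.trans_apply, hc]
  set L := ψ.toRealLinearIsometryEquivOfMapZero hψ0 with hLdef
  have hLψ : ∀ x, L x = φ (x + cubeCenter n) - cubeCenter n := by
    intro x
    have h1 : L x = ψ x := congrFun (ψ.coe_toRealLinearIsometryEquivOfMapZero hψ0) x
    rw [h1, hψ]
    simp [IsometryEquiv.trans_apply, sub_eq_add_neg]
  have hφL : ∀ x, φ x = L (x - cubeCenter n) + cubeCenter n := by
    intro x
    rw [hLψ]
    simp
  have hK : ∀ x : EuclideanSpace ℝ (Fin n), (∀ i, |x i| ≤ 1/2) → ∀ i, |L x i| ≤ 1/2 := by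
    intro x hx i
    have hmem : x + cubeCenter n ∈ unitCube n := by
      intro j
      have := abs_le.mp (hx j)
      simp only [PiLp.add_apply, cubeCenter_apply, Set.mem_Icc]
      constructor <;> linarith [this.1, this.2]
    have hm2 := (hmemiff _).mpr hmem i
    simp only [Set.mem_Icc] at hm2
    rw [hLψ, PiLp.sub_apply, cubeCenter_apply, abs_le]
    constructor <;> linarith [hm2.1, hm2.2]
  have hK' : ∀ x : EuclideanSpace ℝ (Fin n), (∀ i, |x i| ≤ 1/2) → ∀ i, |L.symm x i| ≤ 1/2 := by
    intro x hx i
    have hmem : x + cubeCenter n ∈ unitCube n := by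
      intro j
      have := abs_le.mp (hx j)
      simp only [PiLp.add_apply, cubeCenter_apply, Set.mem_Icc]
      constructor <;> linarith [this.1, this.2]
    have hphi : φ (L.symm x + cubeCenter n) = x + cubeCenter n := by
      rw [hφL]
      simp
    have hmem2 : L.symm x + cubeCenter n ∈ unitCube n := by
      rw [← hmemiff, hphi]; exact hmem
    have hm2 := hmem2 i
    simp only [PiLp.add_apply, cubeCenter_apply, Set.mem_Icc] at hm2
    rw [abs_le]
    constructor <;> linarith [hm2.1, hm2.2]
  have key := fun i => single_image hn L hK hK' i
  choose τ hτ1 hτ2 using key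
  have hinj := tau_inj L τ hτ1 hτ2
  have hbij : Function.Bijective τ := Finite.injective_iff_bijective.mp hinj
  set σ : Equiv.Perm (Fin n) := Equiv.ofBijective τ hbij with hσ
  set s' : Fin n → Bool :=
    fun j => decide ((L (EuclideanSpace.single (σ.symm j) 1)) j = 1) with hs'
  refine ⟨(s', σ.symm), ?_⟩
  apply Subtype.ext
  show (FIso s' σ.symm : EuclideanSpace ℝ (Fin n) ≃ᵢ EuclideanSpace ℝ (Fin n)) = φ
  apply IsometryEquiv.ext
  intro x
  show Fmap s' σ.symm x = φ x
  ext j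
  have hτj : τ (σ.symm j) = j := σ.apply_symm_apply j
  have hform := L_apply_formula L τ hinj hτ2 (x - cubeCenter n) (σ.symm j)
  rw [hτj] at hform
  have hφxj : φ x j = L (x - cubeCenter n) j + 1/2 := by
    rw [hφL x, PiLp.add_apply, cubeCenter_apply]
  rw [hφxj, hform, PiLp.sub_apply, cubeCenter_apply]
  rcases hτ1 (σ.symm j) with h | h <;> rw [hτj] at h
  · have hsj : s' j = true := by simp [hs', h]
    simp only [Fmap, PiLp.toLp_apply, hsj, if_true, h]
    ring
  · have hsj : s' j = false := by simp [hs', h, show (-1:ℝ) ≠ 1 by norm_num]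
    simp only [Fmap, PiLp.toLp_apply, hsj, if_false, h]
    norm_num
    ring

/-- The group of symmetries of the unit hypercube `[0,1]ⁿ` is finite of order
`2ⁿ · n!`. -/
theorem symGroup_unitCube_finite_card (n : ℕ) (hn : 1 ≤ n) :
    Finite (symGroup n (unitCube n)) ∧
    Nat.card (symGroup n (unitCube n)) = 2 ^ n * n.factorial := by
  have hbij : Function.Bijective (Phi n) := ⟨Phi_injective n, Phi_surjective n hn⟩
  have hfin : Finite (symGroup n (unitCube n)) := Finite.of_surjective _ hbij.2
  refine ⟨hfin, ?_⟩
  rw [← Nat.card_eq_of_bijective _ hbij]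
  simp [Nat.card_eq_fintype_card, Fintype.card_perm, Fintype.card_fun]
end
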